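/- arXiv:2605.20617 — 4 statements merged into one kernel-verified Lean document; each statement's English description precedes it below -/
import Mathlib

section
/- Let F : ℝ → ℝ be a convex function such that every supporting line to F has its vertical axis intercept in [0, B] for some B ≥ 0 (i.e., for every s ∈ ℝ and every subgradient v of F at s, one has 0 ≤ F(s) - v·s ≤ B). Then F is Lipschitz on ℝ, with Lipschitz constant max(|F(-1)|, |F(1)|). -/
/-- Every convex function on ℝ has a subgradient at every point. -/
lemma exists_subgradient_of_convexOn (F : ℝ → ℝ) (hF : ConvexOn ℝ Set.univ F) (s : ℝ) :
    ∃ v : ℝ, ∀ t, F s + v * (t - s) ≤ F t := by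
  set A : Set ℝ := (fun a => (F s - F a) / (s - a)) '' Set.Iio s with hA
  have hne : A.Nonempty := ⟨_, ⟨s - 1, by simp, rfl⟩⟩
  have hbdd : BddAbove A := by
    refine ⟨(F (s + 1) - F s) / (s + 1 - s), ?_⟩
    rintro _ ⟨a, ha, rfl⟩
    exact hF.slope_mono_adjacent trivial trivial ha (by linarith)
  refine ⟨sSup A, fun t => ?_⟩
  rcases lt_trichotomy t s with h | h | h
  · have hmem : (F s - F t) / (s - t) ∈ A := ⟨t, h, rfl⟩
    have hle : (F s - F t) / (s - t) ≤ sSup A := le_csSup hbdd hmem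
    have hpos : 0 < s - t := by linarith
    rw [div_le_iff₀ hpos] at hle
    nlinarith
  · simp [h]
  · have hub : sSup A ≤ (F t - F s) / (t - s) := by
      apply csSup_le hne
      rintro _ ⟨a, ha, rfl⟩
      exact hF.slope_mono_adjacent trivial trivial ha h
    have hpos : 0 < t - s := by linarith
    rw [le_div_iff₀ hpos] at hub
    linarith

/-- A convex function on ℝ all of whose supporting lines have vertical
axis intercepts in `[0, B]` is Lipschitz with constant `max |F (-1)| |F 1|`. -/
theorem convex_supporting_intercepts_bounded_lipschitz
    (F : ℝ → ℝ) (B : ℝ) (hB : 0 ≤ B)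
    (hF : ConvexOn ℝ Set.univ F)
    (hsupp : ∀ s v : ℝ, (∀ t, F s + v * (t - s) ≤ F t) →
      0 ≤ F s - v * s ∧ F s - v * s ≤ B) :
    ∀ x y : ℝ, |F x - F y| ≤ max |F (-1)| |F 1| * |x - y| := by
  set L := max |F (-1)| |F 1| with hL
  -- any subgradient is bounded by L in absolute value
  have key : ∀ s v : ℝ, (∀ t, F s + v * (t - s) ≤ F t) → |v| ≤ L := by
    intro s v hv
    have h0 := (hsupp s v hv).1
    have hline : ∀ t, v * t ≤ F t := by
      intro t
      have := hv t
      nlinarith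
    have h1 : v ≤ F 1 := by have := hline 1; linarith
    have h2 : -v ≤ F (-1) := by have := hline (-1); linarith
    have hF1 : F 1 ≤ L := le_trans (le_abs_self _) (le_max_right _ _)
    have hFm1 : F (-1) ≤ L := le_trans (le_abs_self _) (le_max_left _ _)
    rw [abs_le]; constructor <;> linarith
  -- main claim for x ≤ y
  have main : ∀ x y : ℝ, x ≤ y → |F x - F y| ≤ L * (y - x) := by
    intro x y hxy
    obtain ⟨vx, hvx⟩ := exists_subgradient_of_convexOn F hF x
    obtain ⟨vy, hvy⟩ := exists_subgradient_of_convexOn F hF y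
    have hx := key x vx hvx
    have hy := key y vy hvy
    have h1 := hvx y
    have h2 := hvy x
    rw [abs_le] at hx hy
    have hd : 0 ≤ y - x := by linarith
    rw [abs_le]
    constructor <;> nlinarith
  intro x y
  rcases le_total x y with h | h
  · rw [abs_of_nonpos (by linarith : x - y ≤ 0)]
    have := main x y h; linarith
  · rw [abs_of_nonneg (by linarith : 0 ≤ x - y), abs_sub_comm]
    have := main y x h; linarith
end

section
/- Let (X,f) be a topological dynamical system on a compact metric space with the saturated property. Then for every continuous potential φ ∈ C(X), the rotation set R(φ; X, f) := {α ∈ ℝ : L(φ, α) ≠ ∅} equals {∫ φ dμ : μ ∈ M_f(X)}, and this set is a nonempty compact interval. -/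
/-!
Every Birkhoff limit of `φ` is the integral of `φ` against an invariant measure: by the
Krylov–Bogolyubov argument, any weak-* cluster point of the empirical measures along the orbit is
invariant and integrates `φ` to a cluster value of the Birkhoff averages. Conversely, the
saturated property provides for every invariant `μ` a generic point, whose Birkhoff averages of
`φ` converge to `∫ φ dμ`. The set of these integrals is the image of the convex, weak-* compact set
of invariant probability measures under the continuous affine map `μ ↦ ∫ φ dμ`, hence a nonempty
compact interval.
-/

open MeasureTheory Filter Set Topology ENNReal BoundedContinuousFunction

theorem MapClusterPt.eq_of_tendsto {α X : Type*} [TopologicalSpace X] [T2Space X] {F : Filter α}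
    {u : α → X} {x y : X} (hx : MapClusterPt x F u) (hy : Tendsto u F (𝓝 y)) : x = y :=
  eq_of_nhds_neBot (hx.clusterPt.mono hy)

theorem birkhoffAverage_comp {R α M : Type*} [DivisionSemiring R] [AddCommMonoid M] [Module R M]
    (f : α → α) (g : α → M) (n : ℕ) (x : α) :
    birkhoffAverage R f (g ∘ f) n x = birkhoffAverage R f g n (f x) := by
  simp only [birkhoffAverage, birkhoffSum, Function.comp_apply, ← Function.iterate_succ_apply' f,
    Function.iterate_succ_apply]

section InvariantMeasures

variable {X : Type*} [MeasurableSpace X] {f : X → X}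

noncomputable def empiricalMeasure (f : X → X) (x : X) (n : ℕ) : Measure X :=
  (n : ℝ≥0∞)⁻¹ • ∑ k ∈ Finset.range n, Measure.dirac (f^[k] x)

theorem isProbabilityMeasure_empiricalMeasure (x : X) {n : ℕ} (hn : n ≠ 0) :
    IsProbabilityMeasure (empiricalMeasure f x n) := by
  constructor
  simp [empiricalMeasure, ENNReal.inv_mul_cancel (Nat.cast_ne_zero.2 hn) (natCast_ne_top n)]

theorem integral_empiricalMeasure [MeasurableSingletonClass X] (g : X → ℝ) (x : X) (n : ℕ) :
    ∫ y, g y ∂empiricalMeasure f x n = birkhoffAverage ℝ f g n x := by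
  rw [empiricalMeasure, integral_smul_measure,
    integral_finsetSum_measure fun k _ => integrable_dirac enorm_lt_top]
  simp [birkhoffAverage, birkhoffSum]

def invariantProbabilityMeasures (f : X → X) : Set (Measure X) :=
  {μ | IsProbabilityMeasure μ ∧ μ.map f = μ}

variable [TopologicalSpace X] [BorelSpace X]

theorem map_eq_of_mapClusterPt [HasOuterApproxClosed X] (hf : Continuous f) {ι : Type*}
    {l : Filter ι} {ν : ι → ProbabilityMeasure X} {μ : ProbabilityMeasure X}
    (hμ : MapClusterPt μ l ν)
    (hν : ∀ g : X →ᵇ ℝ, Tendsto (fun i => ∫ y, g (f y) ∂ν i - ∫ y, g y ∂ν i) l (𝓝 0)) :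
    (μ : Measure X).map f = μ := by
  have : IsProbabilityMeasure ((μ : Measure X).map f) :=
    Measure.isProbabilityMeasure_map hf.aemeasurable
  refine ext_of_forall_integral_eq_of_IsFiniteMeasure fun g => ?_
  let gf : X →ᵇ ℝ := g.compContinuous ⟨f, hf⟩
  have hcont : Continuous fun μ : ProbabilityMeasure X => ∫ y, gf y ∂μ - ∫ y, g y ∂μ :=
    (ProbabilityMeasure.continuous_integral_boundedContinuousFunction gf).sub
      (ProbabilityMeasure.continuous_integral_boundedContinuousFunction g)
  rw [integral_map hf.aemeasurable g.continuous.aestronglyMeasurable]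
  exact sub_eq_zero.1 <| (hμ.continuousAt_comp hcont.continuousAt).eq_of_tendsto (hν g)

/-- Krylov–Bogolyubov: `μ` is a weak-* cluster point of the empirical measures along the orbit
of `x`. -/
theorem exists_map_eq_mapClusterPt_birkhoffAverage [CompactSpace X] [T2Space X]
    [HasOuterApproxClosed X] (hf : Continuous f) (x : X) :
    ∃ μ : ProbabilityMeasure X, (μ : Measure X).map f = μ ∧
      ∀ g : X →ᵇ ℝ, MapClusterPt (∫ y, g y ∂μ) atTop (birkhoffAverage ℝ f g · x) := by
  let ν : ℕ → ProbabilityMeasure X := fun n =>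
    ⟨empiricalMeasure f x (n + 1), isProbabilityMeasure_empiricalMeasure x n.succ_ne_zero⟩
  have hν : ∀ (g : X → ℝ) n, ∫ y, g y ∂ν n = birkhoffAverage ℝ f g (n + 1) x := fun g n =>
    integral_empiricalMeasure g x (n + 1)
  obtain ⟨μ, hμ⟩ : ∃ μ, MapClusterPt μ atTop ν := exists_clusterPt_of_compactSpace _
  refine ⟨μ, map_eq_of_mapClusterPt hf hμ fun g => ?_, fun g => ?_⟩
  · simp only [hν, ← Function.comp_apply (f := g) (g := f), birkhoffAverage_comp]
    exact (tendsto_birkhoffAverage_apply_sub_birkhoffAverage' ℝ g.isBounded_range f x).comp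
      (tendsto_add_atTop_nat 1)
  · refine MapClusterPt.of_comp (tendsto_add_atTop_nat 1) ?_
    simpa [Function.comp_def, hν] using hμ.continuousAt_comp
      (ProbabilityMeasure.continuous_integral_boundedContinuousFunction g).continuousAt

theorem convex_integral_image_invariantProbabilityMeasures (hf : Measurable f) (g : X →ᵇ ℝ) :
    Convex ℝ ((fun μ => ∫ y, g y ∂μ) '' invariantProbabilityMeasures f) := by
  rintro _ ⟨μ, ⟨hμ, hμf⟩, rfl⟩ _ ⟨ν, ⟨hν, hνf⟩, rfl⟩ a b ha hb hab
  refine ⟨ENNReal.ofReal a • μ + ENNReal.ofReal b • ν, ⟨⟨?_⟩, ?_⟩, ?_⟩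
  · simp [← ENNReal.ofReal_add ha hb, hab]
  · rw [Measure.map_add _ _ hf, Measure.map_smul, Measure.map_smul, hμf, hνf]
  · dsimp only
    rw [integral_add_measure ((g.integrable μ).smul_measure ofReal_ne_top)
      ((g.integrable ν).smul_measure ofReal_ne_top), integral_smul_measure, integral_smul_measure,
      toReal_ofReal ha, toReal_ofReal hb]

theorem isCompact_integral_image_invariantProbabilityMeasures [CompactSpace X] [T2Space X]
    [HasOuterApproxClosed X] (hf : Continuous f) (g : X →ᵇ ℝ) :
    IsCompact ((fun μ => ∫ y, g y ∂μ) '' invariantProbabilityMeasures f) := by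
  have hclosed : IsClosed {μ : ProbabilityMeasure X | μ.map hf.aemeasurable = μ} :=
    isClosed_eq (ProbabilityMeasure.continuous_map hf) continuous_id
  have himage : (fun μ => ∫ y, g y ∂μ) '' invariantProbabilityMeasures f =
      (fun μ : ProbabilityMeasure X => ∫ y, g y ∂μ) '' {μ | μ.map hf.aemeasurable = μ} := by
    ext α
    constructor
    · rintro ⟨μ, ⟨hμ, hμf⟩, rfl⟩
      exact ⟨⟨μ, hμ⟩, ProbabilityMeasure.toMeasure_injective hμf, rfl⟩
    · rintro ⟨μ, hμf, rfl⟩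
      exact ⟨μ, ⟨inferInstance, congrArg ProbabilityMeasure.toMeasure hμf⟩, rfl⟩
  rw [himage]
  exact hclosed.isCompact.image (ProbabilityMeasure.continuous_integral_boundedContinuousFunction g)

end InvariantMeasures

/-- For a topological dynamical system `(X,f)` on a compact metric
space with the saturated property (for every invariant probability measure
`μ`, the generic set `G_μ` is nonempty and its topological entropy equals
`h_μ(f)`), the rotation set `R(φ) = {α : L(φ,α) ≠ ∅}` of every continuous
potential `φ` equals `{∫ φ dμ : μ invariant}` and is a nonempty compact
interval. Here `htop` is the (Bowen) topological entropy of subsets and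
`hent` is the metric entropy of measures. -/
theorem rotation_set_eq_integrals_and_Icc
    {X : Type*} [MetricSpace X] [CompactSpace X] [Nonempty X]
    [MeasurableSpace X] [BorelSpace X]
    (f : X → X) (hf : Continuous f)
    (φ : X → ℝ) (hφ : Continuous φ)
    (htop : Set X → ℝ) (hent : Measure X → ℝ)
    (M : Set (Measure X))
    (hM : M = {μ : Measure X | IsProbabilityMeasure μ ∧ μ.map f = μ})
    (hsat : ∀ μ ∈ M,
      ({x : X | ∀ g : X → ℝ, Continuous g →
          Tendsto (fun n : ℕ => (n : ℝ)⁻¹ * ∑ k ∈ Finset.range n, g (f^[k] x))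
            atTop (nhds (∫ y, g y ∂μ))}).Nonempty ∧
        htop {x : X | ∀ g : X → ℝ, Continuous g →
          Tendsto (fun n : ℕ => (n : ℝ)⁻¹ * ∑ k ∈ Finset.range n, g (f^[k] x))
            atTop (nhds (∫ y, g y ∂μ))} = hent μ) :
    {α : ℝ | ∃ x : X,
        Tendsto (fun n : ℕ => (n : ℝ)⁻¹ * ∑ k ∈ Finset.range n, φ (f^[k] x))
          atTop (nhds α)}
      = {α : ℝ | ∃ μ ∈ M, ∫ y, φ y ∂μ = α} ∧
    ∃ a b : ℝ, a ≤ b ∧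
      {α : ℝ | ∃ x : X,
          Tendsto (fun n : ℕ => (n : ℝ)⁻¹ * ∑ k ∈ Finset.range n, φ (f^[k] x))
            atTop (nhds α)} = Set.Icc a b := by
  subst hM
  let φb : X →ᵇ ℝ := mkOfCompact ⟨φ, hφ⟩
  set S := (fun μ => ∫ y, φb y ∂μ) '' invariantProbabilityMeasures f
  have hrot : {α : ℝ | ∃ x : X, Tendsto (birkhoffAverage ℝ f φ · x) atTop (𝓝 α)} = S := by
    ext α
    constructor
    · rintro ⟨x, hx⟩
      obtain ⟨μ, hμf, hμ⟩ := exists_map_eq_mapClusterPt_birkhoffAverage hf x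
      exact ⟨μ, ⟨inferInstance, hμf⟩, (hμ φb).eq_of_tendsto hx⟩
    · rintro ⟨μ, hμ, rfl⟩
      obtain ⟨x, hx⟩ := (hsat μ hμ).1
      exact ⟨x, hx φ hφ⟩
  have hne : S.Nonempty := by
    obtain ⟨μ, hμf, -⟩ := exists_map_eq_mapClusterPt_birkhoffAverage hf (Classical.arbitrary X)
    exact ⟨_, μ, ⟨inferInstance, hμf⟩, rfl⟩
  have hIcc : S = Icc (sInf S) (sSup S) := eq_Icc_of_connected_compact
    ⟨hne, (convex_integral_image_invariantProbabilityMeasures hf.measurable φb).isPreconnected⟩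
    (isCompact_integral_image_invariantProbabilityMeasures hf φb)
  exact ⟨hrot, sInf S, sSup S, nonempty_Icc.1 (hIcc ▸ hne), hrot.trans hIcc⟩
end

section
/- Let (X,f) satisfy: entropy map upper semicontinuous, saturated property, and unique measure of maximal entropy m_max. Then for any φ ∈ C(X), the multifractal entropy spectrum E_φ(α) = h_top(f, L(φ,α)) attains its maximum value h_top(f) exactly at the single point α* = ∫ φ dm_max. -/
open MeasureTheory Filter

section SpectrumAux

open Topology TopologicalSpace
open scoped NNReal ENNReal

variable {X : Type*} [MetricSpace X] [CompactSpace X] [Nonempty X]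
    [MeasurableSpace X] [BorelSpace X]

private lemma integrable_cm_aux (ν : ProbabilityMeasure X) (g : C(X, ℝ)) :
    Integrable (⇑g) (ν : Measure X) := by
  have := BoundedContinuousFunction.integrable (ν : Measure X)
    (BoundedContinuousFunction.mkOfCompact g)
  exact this

private lemma abs_integral_le_aux (ν : ProbabilityMeasure X) (g : C(X, ℝ)) :
    |∫ x, g x ∂(ν : Measure X)| ≤ ‖g‖ := by
  rw [← Real.norm_eq_abs]
  calc ‖∫ x, g x ∂(ν : Measure X)‖
      ≤ ‖g‖ * ((ν : Measure X) Set.univ).toReal :=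
        norm_integral_le_of_norm_le_const
          (Filter.Eventually.of_forall fun x => g.norm_coe_le_norm x)
    _ = ‖g‖ := by simp

private lemma abs_integral_sub_le_aux (ν : ProbabilityMeasure X) (g h : C(X, ℝ)) :
    |∫ x, g x ∂(ν : Measure X) - ∫ x, h x ∂(ν : Measure X)| ≤ dist g h := by
  rw [← integral_sub (integrable_cm_aux ν g) (integrable_cm_aux ν h), ← Real.norm_eq_abs]
  calc ‖∫ x, (g x - h x) ∂(ν : Measure X)‖
      ≤ dist g h * ((ν : Measure X) Set.univ).toReal :=
        norm_integral_le_of_norm_le_const (Filter.Eventually.of_forall fun x => by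
          rw [Real.norm_eq_abs, ← Real.dist_eq]
          exact ContinuousMap.dist_apply_le_dist x)
    _ = dist g h := by simp

/-- Compactness of the space of Borel probability measures on a compact metric space,
in sequential form: every sequence of probability measures has a subsequence converging
weakly to some probability measure. -/
theorem exists_tendsto_subseq_aux (μs : ℕ → ProbabilityMeasure X) :
    ∃ (μ : ProbabilityMeasure X) (s : ℕ → ℕ), StrictMono s ∧
      Tendsto (fun k => μs (s k)) atTop (𝓝 μ) := by
  classical
  obtain ⟨D, Dcount, Ddense⟩ := TopologicalSpace.exists_countable_dense C(X, ℝ)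
  obtain ⟨u, hu⟩ := Dcount.exists_eq_range Ddense.nonempty
  have hudense : Dense (Set.range u) := hu ▸ Ddense
  set I : ℕ → C(X, ℝ) → ℝ := fun n g => ∫ x, g x ∂(μs n : Measure X) with hI
  -- extract a subsequence along which the integrals of all `u j` converge
  have hmem : ∀ n, (fun j => I n (u j)) ∈ Set.univ.pi (fun j => Set.Icc (-‖u j‖) ‖u j‖) := by
    intro n j _
    exact abs_le.mp (abs_integral_le_aux (μs n) (u j))
  obtain ⟨z, -, s, hs, hconv⟩ :=
    (isCompact_univ_pi fun j => isCompact_Icc).tendsto_subseq hmem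
  have hj : ∀ j, Tendsto (fun k => I (s k) (u j)) atTop (𝓝 (z j)) := by
    intro j
    exact (tendsto_pi_nhds.mp hconv) j
  -- then the integrals of every continuous function converge along the subsequence
  have key : ∀ g : C(X, ℝ), ∃ L, Tendsto (fun k => I (s k) g) atTop (𝓝 L) := by
    intro g
    refine cauchySeq_tendsto_of_complete ?_
    rw [Metric.cauchySeq_iff]
    intro ε hε
    obtain ⟨w, ⟨j, rfl⟩, hw⟩ := Metric.mem_closure_iff.mp (hudense g) (ε/4) (by linarith)
    have hcau := (hj j).cauchySeq
    rw [Metric.cauchySeq_iff] at hcau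
    obtain ⟨N, hN⟩ := hcau (ε/2) (by linarith)
    refine ⟨N, fun m hm n hn => ?_⟩
    have h1 : dist (I (s m) g) (I (s m) (u j)) < ε/4 :=
      lt_of_le_of_lt (by rw [Real.dist_eq]; exact abs_integral_sub_le_aux _ g (u j)) hw
    have h3 : dist (I (s n) (u j)) (I (s n) g) < ε/4 := by
      rw [dist_comm]
      exact lt_of_le_of_lt (by rw [Real.dist_eq]; exact abs_integral_sub_le_aux _ g (u j)) hw
    have h2 : dist (I (s m) (u j)) (I (s n) (u j)) < ε/2 := hN m hm n hn
    calc dist (I (s m) g) (I (s n) g)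
        ≤ dist (I (s m) g) (I (s m) (u j)) + dist (I (s m) (u j)) (I (s n) (u j))
            + dist (I (s n) (u j)) (I (s n) g) := dist_triangle4 _ _ _ _
      _ < ε/4 + ε/2 + ε/4 := by linarith
      _ = ε := by ring
  choose Λ hΛ using key
  -- basic properties of the limit functional Λ
  have Λnn : ∀ g : C(X, ℝ), (∀ x, 0 ≤ g x) → 0 ≤ Λ g := by
    intro g hg
    exact ge_of_tendsto (hΛ g) (Filter.Eventually.of_forall fun k => integral_nonneg hg)
  have Λmono : ∀ g h : C(X, ℝ), (∀ x, g x ≤ h x) → Λ g ≤ Λ h := by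
    intro g h hgh
    exact le_of_tendsto_of_tendsto' (hΛ g) (hΛ h) fun k =>
      integral_mono (integrable_cm_aux _ g) (integrable_cm_aux _ h) hgh
  have Λadd : ∀ g h : C(X, ℝ), Λ (g + h) = Λ g + Λ h := by
    intro g h
    refine tendsto_nhds_unique (hΛ (g + h)) ?_
    have := (hΛ g).add (hΛ h)
    convert this using 1
    funext k
    simp only [hI]
    rw [← integral_add (integrable_cm_aux _ g) (integrable_cm_aux _ h)]
    simp
  have Λone : Λ 1 = 1 := by
    refine tendsto_nhds_unique (hΛ 1) ?_
    have : ∀ k, I (s k) 1 = 1 := by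
      intro k
      simp [hI]
    simp only [this]
    exact tendsto_const_nhds
  -- the Riesz content associated to Λ
  set A : Compacts X → Set C(X, ℝ) :=
    fun K => {f | (∀ x, 0 ≤ f x) ∧ ∀ x ∈ (K : Set X), 1 ≤ f x} with hA
  have one_mem : ∀ K, (1 : C(X, ℝ)) ∈ A K := fun K => ⟨fun x => by simp, fun x _ => by simp⟩
  have Ane : ∀ K, (Λ '' A K).Nonempty := fun K => ⟨Λ 1, 1, one_mem K, rfl⟩
  have Abdd : ∀ K, BddBelow (Λ '' A K) := by
    intro K
    refine ⟨0, ?_⟩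
    rintro b ⟨f, hf, rfl⟩
    exact Λnn f hf.1
  set c : Compacts X → ℝ := fun K => sInf (Λ '' A K) with hc
  have c_le : ∀ K f, f ∈ A K → c K ≤ Λ f := fun K f hf => csInf_le (Abdd K) ⟨f, hf, rfl⟩
  have c_nonneg : ∀ K, 0 ≤ c K := by
    intro K
    refine le_csInf (Ane K) ?_
    rintro b ⟨f, hf, rfl⟩
    exact Λnn f hf.1
  have c_mono : ∀ K₁ K₂ : Compacts X, (K₁ : Set X) ⊆ K₂ → c K₁ ≤ c K₂ := by
    intro K₁ K₂ h
    refine csInf_le_csInf (Abdd K₁) (Ane K₂) (Set.image_mono ?_)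
    rintro f ⟨hf0, hf1⟩
    exact ⟨hf0, fun x hx => hf1 x (h hx)⟩
  have c_sup_le : ∀ K₁ K₂ : Compacts X, c (K₁ ⊔ K₂) ≤ c K₁ + c K₂ := by
    intro K₁ K₂
    refine le_of_forall_pos_le_add fun ε hε => ?_
    obtain ⟨b₁, ⟨f₁, hf₁, rfl⟩, hb₁⟩ := Real.lt_sInf_add_pos (Ane K₁) (half_pos hε)
    obtain ⟨b₂, ⟨f₂, hf₂, rfl⟩, hb₂⟩ := Real.lt_sInf_add_pos (Ane K₂) (half_pos hε)
    have hmemA : f₁ + f₂ ∈ A (K₁ ⊔ K₂) := by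
      constructor
      · intro x
        simpa using add_nonneg (hf₁.1 x) (hf₂.1 x)
      · intro x hx
        have hx' : x ∈ (K₁ : Set X) ∪ (K₂ : Set X) := by
          simpa [Compacts.coe_sup] using hx
        rcases hx' with h | h
        · have := le_add_of_le_of_nonneg (hf₁.2 x h) (hf₂.1 x)
          simpa using this
        · have := le_add_of_nonneg_of_le (hf₁.1 x) (hf₂.2 x h)
          simpa using this
    calc c (K₁ ⊔ K₂) ≤ Λ (f₁ + f₂) := c_le _ _ hmemA
      _ = Λ f₁ + Λ f₂ := Λadd f₁ f₂
      _ ≤ c K₁ + c K₂ + ε := by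
          have := hb₁
          have := hb₂
          simp only [hc] at *
          linarith
  have c_sup_disj : ∀ K₁ K₂ : Compacts X, Disjoint (K₁ : Set X) (K₂ : Set X) →
      c K₁ + c K₂ ≤ c (K₁ ⊔ K₂) := by
    intro K₁ K₂ hdisj
    refine le_csInf (Ane _) ?_
    rintro b ⟨f, hf, rfl⟩
    obtain ⟨g, hg0, hg1, hg01⟩ := exists_continuous_zero_one_of_isClosed
      K₂.isCompact.isClosed K₁.isCompact.isClosed hdisj.symm
    have hmem1 : ∀ x, x ∈ (K₁ : Set X) → x ∈ ((K₁ ⊔ K₂ : Compacts X) : Set X) := by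
      intro x hx
      simp [Compacts.coe_sup, hx]
    have hmem2 : ∀ x, x ∈ (K₂ : Set X) → x ∈ ((K₁ ⊔ K₂ : Compacts X) : Set X) := by
      intro x hx
      simp [Compacts.coe_sup, hx]
    have hp : f * g ∈ A K₁ := by
      constructor
      · intro x
        simpa using mul_nonneg (hf.1 x) (hg01 x).1
      · intro x hx
        have hgx : g x = 1 := hg1 hx
        have hfx : 1 ≤ f x := hf.2 x (hmem1 x hx)
        simp only [ContinuousMap.mul_apply, hgx, mul_one]
        exact hfx
    have hq : f * (1 - g) ∈ A K₂ := by
      constructor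
      · intro x
        have : (0:ℝ) ≤ 1 - g x := by
          have := (hg01 x).2
          linarith
        simpa using mul_nonneg (hf.1 x) this
      · intro x hx
        have hgx : g x = 0 := hg0 hx
        have hfx : 1 ≤ f x := hf.2 x (hmem2 x hx)
        simp only [ContinuousMap.mul_apply, ContinuousMap.sub_apply, ContinuousMap.one_apply, hgx]
        simpa using hfx
    have hsum : f * g + f * (1 - g) = f := by
      ext x
      simp only [ContinuousMap.add_apply, ContinuousMap.mul_apply, ContinuousMap.sub_apply,
        ContinuousMap.one_apply]
      ring
    calc c K₁ + c K₂ ≤ Λ (f * g) + Λ (f * (1 - g)) := add_le_add (c_le _ _ hp) (c_le _ _ hq)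
      _ = Λ (f * g + f * (1 - g)) := (Λadd _ _).symm
      _ = Λ f := by rw [hsum]
  set Γ : MeasureTheory.Content X :=
    { toFun := fun K => (c K).toNNReal
      mono' := fun K₁ K₂ h => Real.toNNReal_le_toNNReal (c_mono K₁ K₂ h)
      sup_disjoint' := fun K₁ K₂ hd _ _ => by
        have h1 : c (K₁ ⊔ K₂) = c K₁ + c K₂ :=
          le_antisymm (c_sup_le K₁ K₂) (c_sup_disj K₁ K₂ hd)
        show (c (K₁ ⊔ K₂)).toNNReal = (c K₁).toNNReal + (c K₂).toNNReal
        rw [h1, Real.toNNReal_add (c_nonneg K₁) (c_nonneg K₂)]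
      sup_le' := fun K₁ K₂ =>
        (Real.toNNReal_le_toNNReal (c_sup_le K₁ K₂)).trans Real.toNNReal_add_le } with hΓ
  -- the associated measure is a probability measure
  have hctop : c ⊤ = 1 := by
    refine le_antisymm ?_ ?_
    · have h := c_le ⊤ 1 (one_mem ⊤)
      rwa [Λone] at h
    · refine le_csInf (Ane ⊤) ?_
      rintro b ⟨f, hf, rfl⟩
      have h : Λ 1 ≤ Λ f := by
        refine Λmono _ _ fun x => ?_
        simpa using hf.2 x (by simp [Compacts.coe_top])
      rwa [Λone] at h
  have hinner : Γ.innerContent ⊤ = 1 := by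
    have h := Γ.innerContent_of_isCompact (K := Set.univ) isCompact_univ isOpen_univ
    have h2 : (Γ ⟨Set.univ, isCompact_univ⟩ : ℝ≥0∞) = 1 := by
      show ((Γ.toFun ⟨Set.univ, isCompact_univ⟩ : ℝ≥0) : ℝ≥0∞) = 1
      have h4 : Γ.toFun ⟨Set.univ, isCompact_univ⟩ = (1:ℝ≥0) := by
        show (c ⟨Set.univ, isCompact_univ⟩).toNNReal = (1:ℝ≥0)
        have h5 : (⟨Set.univ, isCompact_univ⟩ : Compacts X) = ⊤ := rfl
        rw [h5, hctop]
        simp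
      rw [h4]
      simp
    have h3 : (⊤ : Opens X) = ⟨Set.univ, isOpen_univ⟩ := rfl
    rw [h3, h, h2]
  have huniv : Γ.measure Set.univ = 1 := by
    rw [Γ.measure_apply MeasurableSet.univ]
    have h3 : (Set.univ : Set X) = ((⊤ : Opens X) : Set X) := rfl
    rw [h3, Γ.outerMeasure_opens, hinner]
  have hPM : IsProbabilityMeasure Γ.measure := ⟨huniv⟩
  set μP : ProbabilityMeasure X := ⟨Γ.measure, hPM⟩ with hμP
  -- the liminf condition for open sets
  have h_opens : ∀ G : Set X, IsOpen G →
      μP G ≤ atTop.liminf (fun k => (μs (s k)) G) := by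
    intro G hG
    have hEN : Γ.measure G ≤ atTop.liminf (fun k => ((μs (s k) : Measure X) G)) := by
      rw [Γ.measure_apply hG.measurableSet]
      have h3 : G = ((⟨G, hG⟩ : Opens X) : Set X) := rfl
      rw [h3, Γ.outerMeasure_opens]
      refine iSup₂_le fun K hK => ?_
      obtain ⟨g, hg0, hg1, hg01⟩ := exists_continuous_zero_one_of_isClosed
        (isClosed_compl_iff.mpr hG) K.isCompact.isClosed
        (Set.disjoint_left.mpr fun x hx hxK => hx (hK hxK))
      have hgA : g ∈ A K := ⟨fun x => (hg01 x).1, fun x hx => (hg1 hx).ge⟩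
      have hck : c K ≤ Λ g := c_le _ _ hgA
      have hbound : ∀ k, I (s k) g ≤ ((μs (s k) : Measure X) G).toReal := by
        intro k
        have hint : I (s k) g ≤ ∫ x, G.indicator (fun _ => (1:ℝ)) x ∂(μs (s k) : Measure X) := by
          refine integral_mono (integrable_cm_aux _ g)
            ((integrable_const (1:ℝ)).indicator hG.measurableSet) ?_
          intro x
          by_cases hx : x ∈ G
          · simpa [Set.indicator_of_mem hx] using (hg01 x).2
          · have : g x = 0 := hg0 hx
            simp [Set.indicator_of_notMem hx, this]
        rwa [integral_indicator_const (1:ℝ) hG.measurableSet, smul_eq_mul, mul_one] at hint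
      refine ENNReal.le_of_forall_pos_le_add fun ε hε _ => ?_
      have hεR : (0:ℝ) < (ε:ℝ) := by exact_mod_cast hε
      have hev : ∀ᶠ k in atTop,
          ENNReal.ofReal (Λ g - (ε:ℝ)) ≤ ((μs (s k) : Measure X) G) := by
        have hlt : ∀ᶠ k in atTop, Λ g - (ε:ℝ) < I (s k) g :=
          (hΛ g).eventually (eventually_gt_nhds (by linarith))
        filter_upwards [hlt] with k hk
        calc ENNReal.ofReal (Λ g - (ε:ℝ))
            ≤ ENNReal.ofReal (((μs (s k) : Measure X) G).toReal) :=
              ENNReal.ofReal_le_ofReal (hk.le.trans (hbound k))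
          _ = (μs (s k) : Measure X) G := ENNReal.ofReal_toReal (measure_ne_top _ _)
      have hlim : ENNReal.ofReal (Λ g - (ε:ℝ)) ≤
          atTop.liminf (fun k => ((μs (s k) : Measure X) G)) :=
        Filter.le_liminf_of_le (by isBoundedDefault) hev
      have hΓK : (Γ ⟨K.1, K.2⟩ : ℝ≥0∞) = ENNReal.ofReal (c K) := by
        show ((Γ.toFun K : ℝ≥0) : ℝ≥0∞) = ENNReal.ofReal (c K)
        rw [ENNReal.ofReal]
      calc (Γ ⟨K.1, K.2⟩ : ℝ≥0∞) = ENNReal.ofReal (c K) := hΓK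
        _ ≤ ENNReal.ofReal (Λ g) := ENNReal.ofReal_le_ofReal hck
        _ = ENNReal.ofReal ((Λ g - (ε:ℝ)) + (ε:ℝ)) := by rw [sub_add_cancel]
        _ ≤ ENNReal.ofReal (Λ g - (ε:ℝ)) + ENNReal.ofReal (ε:ℝ) := ENNReal.ofReal_add_le
        _ ≤ atTop.liminf (fun k => ((μs (s k) : Measure X) G)) + (ε : ℝ≥0∞) :=
            add_le_add hlim ENNReal.ofReal_coe_nnreal.le
    -- convert the ℝ≥0∞ bound to the ℝ≥0 statement
    have aux : ENNReal.ofNNReal (atTop.liminf (fun k => (μs (s k)) G)) =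
        atTop.liminf (fun k => ((μs (s k)) G : ℝ≥0∞)) := by
      refine Monotone.map_liminf_of_continuousAt (F := atTop) ENNReal.coe_mono
        (fun k => (μs (s k)) G) ?_ ?_ ?_
      · exact ENNReal.continuous_coe.continuousAt
      · exact Filter.IsBoundedUnder.isCoboundedUnder_ge ⟨1, by simp⟩
      · exact ⟨0, by simp⟩
    have hfinal : ((μP G : ℝ≥0) : ℝ≥0∞) ≤
        ((atTop.liminf (fun k => (μs (s k)) G) : ℝ≥0) : ℝ≥0∞) := by
      rw [aux]
      have h1 : ((μP G : ℝ≥0) : ℝ≥0∞) = Γ.measure G := by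
        rw [MeasureTheory.ProbabilityMeasure.ennreal_coeFn_eq_coeFn_toMeasure]
        rfl
      rw [h1]
      refine hEN.trans (le_of_eq ?_)
      congr 1
      funext k
      rw [MeasureTheory.ProbabilityMeasure.ennreal_coeFn_eq_coeFn_toMeasure]
    exact_mod_cast hfinal
  exact ⟨μP, s, hs, MeasureTheory.tendsto_of_forall_isOpen_le_liminf h_opens⟩

end SpectrumAux

/-- Suppose the entropy map is upper semicontinuous, the system
has the saturated property — so that the multifractal entropy spectrum
satisfies `h_top(f, L(φ,α)) = sup{h_μ(f) : ∫ φ dμ = α}` — and there is a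
unique measure of maximal entropy `m_max`. Then for every continuous `φ`,
the spectrum `E_φ(α) = h_top(f, L(φ,α))` attains its maximum value
`h_top(f)` exactly at the single point `α* = ∫ φ dm_max`. -/
theorem spectrum_max_attained_uniquely_at_mmax
    {X : Type*} [MetricSpace X] [CompactSpace X] [Nonempty X]
    [MeasurableSpace X] [BorelSpace X]
    (f : X → X) (hf : Continuous f)
    (φ : X → ℝ) (hφ : Continuous φ)
    (M : Set (ProbabilityMeasure X))
    (hM : M = {μ : ProbabilityMeasure X |
      (μ : Measure X).map f = (μ : Measure X)})
    (hent : ProbabilityMeasure X → ℝ)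
    (husc : UpperSemicontinuousOn hent M)
    (htop : Set X → ℝ)
    -- the rotation set of φ
    (R : Set ℝ) (hR : R = {α : ℝ | ∃ μ ∈ M, ∫ y, φ y ∂(μ : Measure X) = α})
    -- the entropy formula for Birkhoff level sets (saturated property)
    (hformula : ∀ α ∈ R,
      htop {x : X | Tendsto
          (fun n : ℕ => (n : ℝ)⁻¹ * ∑ k ∈ Finset.range n, φ (f^[k] x))
          atTop (nhds α)}
        = sSup {h : ℝ | ∃ μ ∈ M,
            ∫ y, φ y ∂(μ : Measure X) = α ∧ hent μ = h})
    -- unique measure of maximal entropy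
    (Htop : ℝ) (mmax : ProbabilityMeasure X) (hmmax : mmax ∈ M)
    (hHtop : hent mmax = Htop)
    (hle : ∀ μ ∈ M, hent μ ≤ Htop)
    (huniq : ∀ μ ∈ M, hent μ = Htop → μ = mmax) :
    (∀ α ∈ R,
        htop {x : X | Tendsto
            (fun n : ℕ => (n : ℝ)⁻¹ * ∑ k ∈ Finset.range n, φ (f^[k] x))
            atTop (nhds α)} ≤ Htop) ∧
    htop {x : X | Tendsto
        (fun n : ℕ => (n : ℝ)⁻¹ * ∑ k ∈ Finset.range n, φ (f^[k] x))
        atTop (nhds (∫ y, φ y ∂(mmax : Measure X)))} = Htop ∧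
    ∀ α ∈ R,
      htop {x : X | Tendsto
          (fun n : ℕ => (n : ℝ)⁻¹ * ∑ k ∈ Finset.range n, φ (f^[k] x))
          atTop (nhds α)} = Htop →
        α = ∫ y, φ y ∂(mmax : Measure X) := by
  classical
  -- notation for the value sets
  set S : ℝ → Set ℝ := fun α => {h : ℝ | ∃ μ ∈ M,
      ∫ y, φ y ∂(μ : Measure X) = α ∧ hent μ = h} with hS
  have hSne : ∀ α ∈ R, (S α).Nonempty := by
    intro α hα
    rw [hR] at hα
    obtain ⟨μ, hμM, hμint⟩ := hα
    exact ⟨hent μ, μ, hμM, hμint, rfl⟩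
  have hSbdd : ∀ α : ℝ, ∀ h ∈ S α, h ≤ Htop := by
    rintro α h ⟨μ, hμM, -, rfl⟩
    exact hle μ hμM
  have hP1 : ∀ α ∈ R, sSup (S α) ≤ Htop := fun α hα =>
    csSup_le (hSne α hα) (hSbdd α)
  have hαstar : (∫ y, φ y ∂(mmax : Measure X)) ∈ R := by
    rw [hR]
    exact ⟨mmax, hmmax, rfl⟩
  refine ⟨?_, ?_, ?_⟩
  · -- the spectrum is bounded by Htop
    intro α hα
    rw [hformula α hα]
    exact hP1 α hα
  · -- the maximum is attained at α*
    rw [hformula _ hαstar]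
    refine le_antisymm (hP1 _ hαstar) ?_
    refine le_csSup ⟨Htop, hSbdd _⟩ ?_
    exact ⟨mmax, hmmax, rfl, hHtop⟩
  · -- uniqueness
    intro α hα hE
    rw [hformula α hα] at hE
    -- select near-maximizing measures
    have hsel : ∀ n : ℕ, ∃ μ' : ProbabilityMeasure X, μ' ∈ M ∧
        (∫ y, φ y ∂(μ' : Measure X) = α) ∧ Htop - 1/((n:ℝ)+1) < hent μ' := by
      intro n
      have hpos : (0:ℝ) < 1/((n:ℝ)+1) := by positivity
      have hlt : Htop - 1/((n:ℝ)+1) < sSup (S α) := by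
        rw [hE]
        linarith
      obtain ⟨h', hh'S, hlt'⟩ := exists_lt_of_lt_csSup (hSne α hα) hlt
      obtain ⟨μ', hμ'M, hint', hh'⟩ := hh'S
      exact ⟨μ', hμ'M, hint', hh' ▸ hlt'⟩
    choose g hgM hgint hgent using hsel
    obtain ⟨μlim, s, hs, hconv⟩ := exists_tendsto_subseq_aux g
    have hints : ∀ ψ : BoundedContinuousFunction X ℝ, Tendsto (fun k => ∫ x, ψ x ∂(g (s k) : Measure X)) atTop
        (nhds (∫ x, ψ x ∂(μlim : Measure X))) :=
      MeasureTheory.ProbabilityMeasure.tendsto_iff_forall_integral_tendsto.mp hconv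
    -- the limit measure has mean α
    have hφint : ∫ y, φ y ∂(μlim : Measure X) = α := by
      have h1 := hints (BoundedContinuousFunction.mkOfCompact ⟨φ, hφ⟩)
      simp only [BoundedContinuousFunction.mkOfCompact_apply, ContinuousMap.coe_mk] at h1
      have h2 : Tendsto (fun k => ∫ x, φ x ∂(g (s k) : Measure X)) atTop (nhds α) := by
        have : (fun k => ∫ x, φ x ∂(g (s k) : Measure X)) = fun _ => α := by
          funext k
          exact hgint (s k)
        rw [this]
        exact tendsto_const_nhds
      exact tendsto_nhds_unique h1 h2
    -- the limit measure is invariant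
    have hμlimM : μlim ∈ M := by
      rw [hM]
      show (μlim : Measure X).map f = (μlim : Measure X)
      have hPMmap : IsProbabilityMeasure ((μlim : Measure X).map f) :=
        Measure.isProbabilityMeasure_map hf.measurable.aemeasurable
      set P' : ProbabilityMeasure X := ⟨(μlim : Measure X).map f, hPMmap⟩ with hP'def
      have hP' : Tendsto (fun k => g (s k)) atTop (nhds P') := by
        rw [MeasureTheory.ProbabilityMeasure.tendsto_iff_forall_integral_tendsto]
        intro ψ
        have hψf : Tendsto (fun k => ∫ x, ψ (f x) ∂(g (s k) : Measure X)) atTop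
            (nhds (∫ x, ψ (f x) ∂(μlim : Measure X))) := by
          have h := hints (ψ.compContinuous ⟨f, hf⟩)
          simpa using h
        have heq : ∀ k, ∫ x, ψ (f x) ∂(g (s k) : Measure X)
            = ∫ x, ψ x ∂(g (s k) : Measure X) := by
          intro k
          have hinv : ((g (s k) : Measure X)).map f = (g (s k) : Measure X) := by
            have h := hgM (s k)
            rw [hM] at h
            exact h
          conv_rhs => rw [← hinv]
          rw [integral_map hf.measurable.aemeasurable ψ.continuous.aestronglyMeasurable]
        have h2 : ∫ x, ψ x ∂(P' : Measure X) = ∫ x, ψ (f x) ∂(μlim : Measure X) :=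
          integral_map hf.measurable.aemeasurable ψ.continuous.aestronglyMeasurable
        rw [h2]
        exact Tendsto.congr heq hψf
      have hEq : P' = μlim := tendsto_nhds_unique hP' hconv
      exact congrArg (fun p : ProbabilityMeasure X => (p : Measure X)) hEq
    -- the limit measure has maximal entropy
    have hentμlim : hent μlim = Htop := by
      refine le_antisymm (hle _ hμlimM) ?_
      by_contra hcon
      rw [not_le] at hcon
      set y : ℝ := (hent μlim + Htop) / 2 with hy
      have hy1 : hent μlim < y := by rw [hy]; linarith
      have hy2 : y < Htop := by rw [hy]; linarith
      have husc' := husc μlim hμlimM y hy1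
      have htendM : Tendsto (fun k => g (s k)) atTop (nhdsWithin μlim M) :=
        tendsto_nhdsWithin_iff.mpr ⟨hconv, Filter.Eventually.of_forall fun k => hgM (s k)⟩
      have hev : ∀ᶠ k in atTop, hent (g (s k)) < y := htendM.eventually husc'
      obtain ⟨N, hN⟩ := Filter.eventually_atTop.mp hev
      obtain ⟨k0, hk0⟩ := exists_nat_gt (Htop - y)⁻¹
      set k := max N k0 with hk
      have h1 : hent (g (s k)) < y := hN k (le_max_left _ _)
      have hsk : (k : ℝ) ≤ (s k : ℝ) := by exact_mod_cast hs.le_apply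
      have hk0' : (Htop - y)⁻¹ < (s k : ℝ) + 1 := by
        have : (k0 : ℝ) ≤ (k : ℝ) := by exact_mod_cast le_max_right N k0
        linarith
      have hypos : 0 < Htop - y := by linarith
      have hinv : 1/((s k : ℝ) + 1) < Htop - y := by
        rw [one_div]
        exact (inv_lt_comm₀ (by positivity) hypos).mpr hk0'
      have h2 := hgent (s k)
      linarith
    -- conclude via uniqueness of the measure of maximal entropy
    have : μlim = mmax := huniq μlim hμlimM hentμlim
    rw [← hφint, this]
end

section
/- Let (X,f) be a dynamical system with finite topological entropy, φ ∈ C(X), and for each s ∈ ℝ let μ_s be an equilibrium state for sφ with h_s := h_{μ_s}(f) and a_s := ∫φ dμ_s. Then s ↦ h_s is nonincreasing on [0,∞) and nondecreasing on (-∞,0]. -/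
open MeasureTheory

/-- For a system with finite topological entropy `Htop`, if
`μ s` is an equilibrium state for `s·φ` with entropy `h_s := hent (μ s)`,
then `s ↦ h_s` is nonincreasing on `[0,∞)` and nondecreasing on `(-∞,0]`. -/
theorem equilibrium_entropy_monotone
    {X : Type*} [MeasurableSpace X]
    (f : X → X) (φ : X → ℝ)
    (M : Set (Measure X))
    (hM : M = {μ : Measure X | IsProbabilityMeasure μ ∧ μ.map f = μ})
    (hent : Measure X → ℝ)
    (Htop : ℝ) (hfin : ∀ ν ∈ M, hent ν ≤ Htop)
    (μ : ℝ → Measure X) (hμM : ∀ s : ℝ, μ s ∈ M)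
    (heq : ∀ s : ℝ, ∀ ν ∈ M,
      hent ν + s * ∫ y, φ y ∂ν ≤ hent (μ s) + s * ∫ y, φ y ∂(μ s)) :
    (∀ s₁ s₂ : ℝ, 0 ≤ s₁ → s₁ < s₂ → hent (μ s₂) ≤ hent (μ s₁)) ∧
    (∀ s₁ s₂ : ℝ, s₁ < s₂ → s₂ ≤ 0 → hent (μ s₁) ≤ hent (μ s₂)) := by
  constructor
  · intro s₁ s₂ hs₁ hlt
    have h1 := heq s₁ (μ s₂) (hμM s₂)
    have h2 := heq s₂ (μ s₁) (hμM s₁)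
    nlinarith [mul_nonneg hs₁ (sub_nonneg.2 hlt.le)]
  · intro s₁ s₂ hlt hs₂
    have h1 := heq s₁ (μ s₂) (hμM s₂)
    have h2 := heq s₂ (μ s₁) (hμM s₁)
    nlinarith [mul_nonneg (neg_nonneg.2 hs₂) (sub_nonneg.2 hlt.le)]
end
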